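/- Fix a positive integer ρ and define the polynomial P_ρ(x) := x(1 − 2(1 − (1−x)²)^ρ). Then P_ρ has a unique stationary point x* in the open interval (0,1) (i.e. a unique x* ∈ (0,1) with P_ρ′(x*) = 0), and P_ρ attains its maximum over [0,1] at x*. -/

import Mathlib

/-!
Write `ρ = n + 1` and `P = P_ρ`. Then `P' = 1 - G` with
`G y = 2 y^(n+1) (2 - y)^n ((2n+4) - (2n+3) y)`, and `(2 - y) G'` is a positive multiple of the
quadratic `(2n+3) y² - 4(n+2) y + 2(n+2)` on `(0, 1)`. Its smaller root `c` lies in `(0, 1)`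
and its larger root beyond `1`, so `G` increases on `[0, c]` and decreases on `[c, 1]` down to
`G 1 = 2`.
Hence `G = 1` has at most one solution in `(0, 1)`. On the other hand `P 0 = 0`, `P 1 = -1` and
`P (1/8) > 0`, so the maximum of `P` on `[0, 1]` is attained inside, where it is stationary.
-/

open Set

theorem injOn_of_strictMonoOn_of_strictAntiOn {α β : Type*} [LinearOrder α] [Preorder β]
    {g : α → β} {a b c : α} (hmono : StrictMonoOn g (Icc a c))
    (hanti : StrictAntiOn g (Icc c b)) :
    InjOn g {y ∈ Icc a b | g y < g b} := by
  have hlt : ∀ y ∈ {y ∈ Icc a b | g y < g b}, y ∈ Icc a c := by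
    rintro y ⟨⟨hay, hyb⟩, hgy⟩
    refine ⟨hay, le_of_not_gt fun hcy => ?_⟩
    rcases hyb.lt_or_eq with hyb | rfl
    · exact (hanti ⟨hcy.le, hyb.le⟩ ⟨hcy.le.trans hyb.le, le_rfl⟩ hyb).not_gt hgy
    · exact hgy.false
  exact fun y hy z hz => hmono.injOn (hlt y hy) (hlt z hz)

theorem exists_mem_Ioo_isMaxOn_Icc {α β : Type*} [ConditionallyCompleteLinearOrder α]
    [TopologicalSpace α] [OrderTopology α] [LinearOrder β] [TopologicalSpace β]
    [OrderClosedTopology β] {f : α → β} {a b t : α} (hf : ContinuousOn f (Icc a b))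
    (ht : t ∈ Icc a b) (ha : f a < f t) (hb : f b < f t) :
    ∃ x ∈ Ioo a b, IsMaxOn f (Icc a b) x := by
  obtain ⟨x, hx, hmax⟩ := isCompact_Icc.exists_isMaxOn ⟨t, ht⟩ hf
  have hfx : f t ≤ f x := hmax ht
  refine ⟨x, ⟨hx.1.lt_of_ne ?_, hx.2.lt_of_ne ?_⟩, hmax⟩
  · rintro rfl; exact ha.not_ge hfx
  · rintro rfl; exact hb.not_ge hfx

noncomputable def routingPoly (ρ : ℕ) (x : ℝ) : ℝ := x * (1 - 2 * (1 - (1 - x) ^ 2) ^ ρ)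

noncomputable def routingGap (n : ℕ) (y : ℝ) : ℝ :=
  2 * y ^ (n + 1) * (2 - y) ^ n * ((2 * n + 4) - (2 * n + 3) * y)

noncomputable def routingQuad (n : ℕ) (y : ℝ) : ℝ :=
  (2 * n + 3) * y ^ 2 - 4 * (n + 2) * y + 2 * (n + 2)

theorem hasDerivAt_routingPoly (n : ℕ) (y : ℝ) :
    HasDerivAt (routingPoly (n + 1)) (1 - routingGap n y) y := by
  have hq : HasDerivAt (fun z : ℝ => 1 - (1 - z) ^ 2) (2 * (1 - y)) y := by
    simpa using (((hasDerivAt_id' y).const_sub 1).fun_pow 2).const_sub 1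
  refine ((hasDerivAt_id' y).fun_mul
    (((hq.fun_pow (n + 1)).const_mul 2).const_sub 1)).congr_deriv ?_
  simp only [routingGap, Nat.add_sub_cancel, show (1:ℝ) - (1 - y) ^ 2 = y * (2 - y) by ring,
    mul_pow]
  push_cast
  ring

theorem hasDerivAt_routingGap (n : ℕ) {y : ℝ} (hy : y ≠ 2) :
    HasDerivAt (routingGap n)
      (4 * (n + 1) * y ^ n * (2 - y) ^ n * routingQuad n y / (2 - y)) y := by
  have hB : HasDerivAt (fun y : ℝ => (2 - y) ^ n) (-(n * (2 - y) ^ (n - 1))) y := by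
    simpa using ((hasDerivAt_id' y).const_sub 2).fun_pow n
  have hC : HasDerivAt (fun y : ℝ => (2 * n + 4) - (2 * n + 3) * y) (-(2 * n + 3 : ℝ)) y := by
    simpa using ((hasDerivAt_id' y).const_mul (2 * n + 3 : ℝ)).const_sub (2 * n + 4 : ℝ)
  refine ((((hasDerivAt_pow (n + 1) y).const_mul 2).fun_mul hB).fun_mul hC).congr_deriv ?_
  have h2y : (2 : ℝ) - y ≠ 0 := sub_ne_zero.mpr (Ne.symm hy)
  rw [eq_div_iff h2y, routingQuad]
  rcases n with _ | m <;> push_cast <;> ring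

noncomputable def routingQuadRoot (n : ℕ) : ℝ := ((2 * n + 4) - √(2 * n + 4)) / (2 * n + 3)

theorem routingQuad_eq_mul (n : ℕ) (y : ℝ) :
    routingQuad n y
      = (2 * n + 3) * (y - routingQuadRoot n)
        * (y - ((2 * n + 4) + √(2 * n + 4)) / (2 * n + 3)) := by
  have hs : √(2 * n + 4 : ℝ) ^ 2 = 2 * n + 4 := Real.sq_sqrt (by positivity)
  simp only [routingQuad, routingQuadRoot]
  field_simp
  linear_combination hs

theorem routingQuadRoot_mem_Ioo (n : ℕ) : routingQuadRoot n ∈ Ioo 0 1 := by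
  have h1 : 1 < √(2 * n + 4 : ℝ) :=
    Real.lt_sqrt_of_sq_lt (by linarith [(n.cast_nonneg : (0 : ℝ) ≤ n)])
  have h2 : √(2 * n + 4 : ℝ) < 2 * n + 4 := (Real.sqrt_lt' (by positivity)).mpr (by nlinarith)
  constructor
  · exact div_pos (by linarith) (by positivity)
  · rw [routingQuadRoot, div_lt_one (by positivity)]
    linarith

theorem routingQuad_pos {n : ℕ} {y : ℝ} (hy : y < routingQuadRoot n) : 0 < routingQuad n y := by
  have hd : routingQuadRoot n < ((2 * n + 4) + √(2 * n + 4)) / (2 * n + 3) := by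
    have hs : 0 < √(2 * n + 4 : ℝ) := Real.sqrt_pos.mpr (by positivity)
    rw [routingQuadRoot]
    exact div_lt_div_of_pos_right (by linarith) (by positivity)
  rw [routingQuad_eq_mul]
  exact mul_pos_of_neg_of_neg (mul_neg_of_pos_of_neg (by positivity) (by linarith)) (by linarith)

theorem routingQuad_neg {n : ℕ} {y : ℝ} (hc : routingQuadRoot n < y) (hy : y ≤ 1) :
    routingQuad n y < 0 := by
  have hd : 1 < ((2 * n + 4) + √(2 * n + 4)) / (2 * n + 3) := by
    rw [one_lt_div (by positivity)]; linarith [Real.sqrt_nonneg (2 * n + 4 : ℝ)]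
  rw [routingQuad_eq_mul]
  exact mul_neg_of_pos_of_neg (mul_pos (by positivity) (by linarith)) (by linarith)

theorem routingGap_continuous (n : ℕ) : Continuous (routingGap n) := by
  unfold routingGap; fun_prop

theorem routingGap_strictMonoOn (n : ℕ) :
    StrictMonoOn (routingGap n) (Icc 0 (routingQuadRoot n)) := by
  refine strictMonoOn_of_deriv_pos (convex_Icc _ _) (routingGap_continuous n).continuousOn ?_
  intro y hy
  rw [interior_Icc] at hy
  obtain ⟨hy0, hyc⟩ := hy
  have hy2 : y < 2 := by linarith [(routingQuadRoot_mem_Ioo n).2]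
  rw [(hasDerivAt_routingGap n hy2.ne).deriv]
  have := routingQuad_pos hyc
  have := sub_pos.mpr hy2
  positivity

theorem routingGap_strictAntiOn (n : ℕ) :
    StrictAntiOn (routingGap n) (Icc (routingQuadRoot n) 1) := by
  refine strictAntiOn_of_deriv_neg (convex_Icc _ _) (routingGap_continuous n).continuousOn ?_
  intro y hy
  rw [interior_Icc] at hy
  obtain ⟨hcy, hy1⟩ := hy
  have hy0 : 0 < y := (routingQuadRoot_mem_Ioo n).1.trans hcy
  have h2y : 0 < 2 - y := by linarith
  rw [(hasDerivAt_routingGap n (by linarith)).deriv]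
  exact div_neg_of_neg_of_pos
    (mul_neg_of_pos_of_neg (by positivity) (routingQuad_neg hcy hy1.le)) h2y

theorem routingGap_one (n : ℕ) : routingGap n 1 = 2 := by
  norm_num [routingGap]

theorem routingGap_injOn (n : ℕ) : InjOn (routingGap n) {y ∈ Icc 0 1 | routingGap n y < 2} := by
  simpa only [routingGap_one] using
    injOn_of_strictMonoOn_of_strictAntiOn (routingGap_strictMonoOn n) (routingGap_strictAntiOn n)

theorem routingPoly_eighth_pos (n : ℕ) : 0 < routingPoly (n + 1) (1 / 8) := by
  have hp : ((15 : ℝ) / 64) ^ (n + 1) ≤ 15 / 64 :=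
    pow_le_of_le_one (by norm_num) (by norm_num) n.succ_ne_zero
  norm_num [routingPoly]
  linarith

theorem h_poly_unique_stationary_point (ρ : ℕ) (hρ : 1 ≤ ρ) :
    ∃ x : ℝ, x ∈ Set.Ioo (0:ℝ) 1 ∧
      deriv (fun y : ℝ => y * (1 - 2 * (1 - (1 - y) ^ 2) ^ ρ)) x = 0 ∧
      (∀ y ∈ Set.Ioo (0:ℝ) 1,
        deriv (fun z : ℝ => z * (1 - 2 * (1 - (1 - z) ^ 2) ^ ρ)) y = 0 → y = x) ∧
      ∀ y ∈ Set.Icc (0:ℝ) 1,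
        y * (1 - 2 * (1 - (1 - y) ^ 2) ^ ρ) ≤ x * (1 - 2 * (1 - (1 - x) ^ 2) ^ ρ) := by
  obtain ⟨n, rfl⟩ := Nat.exists_eq_add_of_le' hρ
  change ∃ x ∈ Ioo (0 : ℝ) 1, deriv (routingPoly (n + 1)) x = 0 ∧
    (∀ y ∈ Ioo (0 : ℝ) 1, deriv (routingPoly (n + 1)) y = 0 → y = x) ∧
    IsMaxOn (routingPoly (n + 1)) (Icc 0 1) x
  have hcont : Continuous (routingPoly (n + 1)) := by unfold routingPoly; fun_prop
  have h0 : routingPoly (n + 1) 0 = 0 := by simp [routingPoly]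
  have h1 : routingPoly (n + 1) 1 = -1 := by norm_num [routingPoly]
  have h8 := routingPoly_eighth_pos n
  obtain ⟨x, hx, hmax⟩ := exists_mem_Ioo_isMaxOn_Icc (a := 0) (b := 1) (t := 1 / 8)
    hcont.continuousOn ⟨by norm_num, by norm_num⟩ (by rwa [h0]) (by linarith)
  have hstat {y : ℝ} : deriv (routingPoly (n + 1)) y = 0 ↔ routingGap n y = 1 := by
    rw [(hasDerivAt_routingPoly n y).deriv, sub_eq_zero, eq_comm]
  have hx₀ : deriv (routingPoly (n + 1)) x = 0 :=
    (hmax.isLocalMax (Icc_mem_nhds hx.1 hx.2)).deriv_eq_zero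
  refine ⟨x, hx, hx₀, fun y hy hy₀ => ?_, hmax⟩
  have hGy := hstat.mp hy₀
  have hGx := hstat.mp hx₀
  exact routingGap_injOn n ⟨Ioo_subset_Icc_self hy, hGy.trans_lt one_lt_two⟩
    ⟨Ioo_subset_Icc_self hx, hGx.trans_lt one_lt_two⟩ (hGy.trans hGx.symm)
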